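/- arXiv:2303.02066 — 3 statements merged into one kernel-verified Lean document; each statement's English description precedes it below -/
import Mathlib

section
/- Let 𝒞 be an arrangement of m ≥ 2 cameras with pairwise distinct centers such that no four camera centers are collinear, and let X_𝒞 := {ℓ = (ℓ_1,…,ℓ_m) ∈ Ĺ_𝒞 : ℓ_i ≠ 0 for all 1 ≤ i ≤ m}. Then X_𝒞 is Zariski dense in Ĺ_𝒞, i.e. the Zariski closure of X_𝒞 equals Ĺ_𝒞. -/
/-!
The cone `Ĺ_𝒞` is Zariski closed: it is cut out by the `3 × 3` minors of `M(ℓ)`, which are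
polynomials in `ℓ`. Conversely, for `ℓ ∈ Ĺ_𝒞` the columns of `M(ℓ)` lie in a plane `W ⊆ ℂ⁴`.
Each `C_jᵀ` has rank 3, so its image meets `W` in a nonzero vector `C_jᵀ u_j` (as `3 + 2 > 4`).
Then `ℓ + t u ∈ Ĺ_𝒞` for every `t`, and `ℓ + t u ∈ X_𝒞` for all but finitely many `t`; a polynomial
vanishing on `X_𝒞` thus restricts to a univariate polynomial with infinitely many roots, so it
vanishes at `ℓ`.
-/

open MvPolynomial

noncomputable section

abbrev Vec3 := Fin 3 → ℂ
abbrev Vec4 := Fin 4 → ℂ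
abbrev Camera := Matrix (Fin 3) (Fin 4) ℂ

/-- The polynomial ring `R = ℂ[ℓ_{i,j} : 1 ≤ i ≤ 3, 1 ≤ j ≤ m]`. -/
abbrev LineRing (m : ℕ) := MvPolynomial (Fin 3 × Fin m) ℂ

/-- `c` is (a representative of) the center of the camera `C`. -/
def IsCenter (C : Camera) (c : Vec4) : Prop := c ≠ 0 ∧ C.mulVec c = 0

/-- A camera arrangement: `m ≥ 2` cameras of rank 3 with pairwise distinct centers. -/
def IsCameraArrangement {m : ℕ} (𝒞 : Fin m → Camera) : Prop :=
  2 ≤ m ∧ (∀ i, (𝒞 i).rank = 3) ∧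
    ∀ i j : Fin m, i ≠ j → ¬ ∃ c : Vec4, IsCenter (𝒞 i) c ∧ IsCenter (𝒞 j) c

/-- The cameras indexed by `S` have collinear centers: all of their centers lie on a
common projective line in ℙ³, i.e. in a common linear subspace of dimension ≤ 2 of ℂ⁴. -/
def CollinearCenters {m : ℕ} (𝒞 : Fin m → Camera) (S : Set (Fin m)) : Prop :=
  ∃ W : Submodule ℂ Vec4, Module.finrank ℂ W ≤ 2 ∧
    ∀ i ∈ S, ∃ c : Vec4, IsCenter (𝒞 i) c ∧ c ∈ W

/-- No four camera centers are collinear. -/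
def NoFourCollinear {m : ℕ} (𝒞 : Fin m → Camera) : Prop :=
  ∀ S : Finset (Fin m), S.card = 4 → ¬ CollinearCenters 𝒞 ↑S

/-- Identify a tuple `ℓ ∈ (ℂ³)^m` with a point of the affine space `ℂ^{3m}`. -/
def flat {m : ℕ} (ℓ : Fin m → Vec3) : Fin 3 × Fin m → ℂ := fun p => ℓ p.2 p.1

/-- The ideal of all polynomials of `R` vanishing on a set `S ⊆ (ℂ³)^m`. -/
def vanishingOn {m : ℕ} (S : Set (Fin m → Vec3)) : Ideal (LineRing m) :=
  MvPolynomial.vanishingIdeal ℂ (flat '' S)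

/-- The zero locus in `(ℂ³)^m` of an ideal of `R`. -/
def zLocus {m : ℕ} (I : Ideal (LineRing m)) : Set (Fin m → Vec3) :=
  flat ⁻¹' MvPolynomial.zeroLocus ℂ I

/-- The Zariski closure of a subset of `(ℂ³)^m`. -/
def zariskiClosure {m : ℕ} (S : Set (Fin m → Vec3)) : Set (Fin m → Vec3) :=
  zLocus (vanishingOn S)

/-- The scalar 4×m matrix `M(ℓ)` whose `j`-th column is `C_jᵀ ℓ_j`. -/
def Mmat {m : ℕ} (𝒞 : Fin m → Camera) (ℓ : Fin m → Vec3) : Matrix (Fin 4) (Fin m) ℂ :=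
  Matrix.of fun r j => (𝒞 j).transpose.mulVec (ℓ j) r

/-- The cone over the line multiview variety:
`Ĺ_𝒞 = {ℓ ∈ (ℂ³)^m : rank M(ℓ) ≤ 2}`. -/
def coneLMV {m : ℕ} (𝒞 : Fin m → Camera) : Set (Fin m → Vec3) :=
  {ℓ | (Mmat 𝒞 ℓ).rank ≤ 2}

open Module Submodule
open scoped Matrix

namespace Matrix

variable {K m n : Type*} [Field K] [Fintype n]

lemma exists_linearIndependent_cols_of_le_rank (A : Matrix m n K) {k : ℕ} (h : k ≤ A.rank) :
    ∃ c : Fin k → n, LinearIndependent K (A.submatrix id c).col := by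
  obtain ⟨κ, a, ha, hspan, hli⟩ := exists_linearIndependent' K A.col
  have : Fintype κ := Fintype.ofInjective a ha
  have hk : k ≤ Fintype.card κ := by
    rwa [rank_eq_finrank_span_cols, ← hspan, finrank_span_eq_card hli] at h
  obtain ⟨e⟩ : Nonempty (Fin k ↪ κ) := Function.Embedding.nonempty_of_card_le (by simpa using hk)
  exact ⟨a ∘ e, hli.comp e e.injective⟩

lemma rank_le_iff_det_submatrix_eq_zero [Fintype m] (A : Matrix m n K) (k : ℕ) :
    A.rank ≤ k ↔ ∀ (r : Fin (k + 1) → m) (c : Fin (k + 1) → n), (A.submatrix r c).det = 0 := by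
  constructor
  · intro h r c
    by_contra hdet
    have := (rank_of_det_ne_zero hdet).symm.trans_le ((A.rank_submatrix_le r c).trans h)
    simp at this
  · intro h
    by_contra! hk
    obtain ⟨c, hc⟩ := A.exists_linearIndependent_cols_of_le_rank hk
    have hB : (A.submatrix id c)ᵀ.rank = k + 1 := by
      rw [LinearIndependent.rank_matrix (by rwa [row_transpose]), Fintype.card_fin]
    obtain ⟨r, hr⟩ := (A.submatrix id c)ᵀ.exists_linearIndependent_cols_of_le_rank hB.ge
    have hunit : IsUnit (A.submatrix r c) := linearIndependent_rows_iff_isUnit.1 hr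
    exact (isUnit_iff_isUnit_det _).1 hunit |>.ne_zero (h r c)

lemma rank_le_finrank_of_col_mem [Finite m] (A : Matrix m n K) {W : Submodule K (m → K)}
    (h : ∀ j, A.col j ∈ W) : A.rank ≤ finrank K W := by
  rw [rank_eq_finrank_span_cols]
  exact finrank_mono (span_le.2 (Set.range_subset_iff.2 h))

lemma exists_mulVec_ne_zero_mem [Fintype m] (A : Matrix m n K) {W : Submodule K (m → K)}
    (h : Fintype.card m < A.rank + finrank K W) : ∃ u, A *ᵥ u ≠ 0 ∧ A *ᵥ u ∈ W := by
  have : ¬ Disjoint (LinearMap.range A.mulVecLin) W := fun hdisj => by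
    have := finrank_add_finrank_le_of_disjoint hdisj
    rw [finrank_fintype_fun_eq_card] at this
    exact absurd h (not_lt.2 this)
  obtain ⟨_, ⟨⟨u, rfl⟩, hW⟩, hne⟩ := exists_mem_ne_zero_of_ne_bot (disjoint_iff.not.1 this)
  exact ⟨u, hne, hW⟩

end Matrix

lemma Submodule.exists_le_finrank_eq {K V : Type*} [DivisionRing K] [AddCommGroup V] [Module K V]
    [FiniteDimensional K V] {p : Submodule K V} {k : ℕ} (hp : finrank K p ≤ k)
    (hk : k ≤ finrank K V) : ∃ q, p ≤ q ∧ finrank K q = k := by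
  induction k with
  | zero => exact ⟨p, le_rfl, by omega⟩
  | succ k ih =>
    obtain hp' | hp' := hp.eq_or_lt
    · exact ⟨p, le_rfl, hp'⟩
    obtain ⟨q, hpq, hq⟩ := ih (by omega) (by omega)
    obtain ⟨v, hv⟩ : ∃ v, v ∉ q := by
      by_contra! hall
      rw [eq_top_iff'.2 hall, finrank_top] at hq
      omega
    exact ⟨q ⊔ K ∙ v, hpq.trans le_sup_left, by rw [finrank_sup_span_singleton hv, hq]⟩

lemma MvPolynomial.eval_eq_zero_of_eventually_eval_add_smul {σ K : Type*} [Field K] [Infinite K]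
    {p : MvPolynomial σ K} {x u : σ → K}
    (h : ∀ᶠ t : K in Filter.cofinite, eval (x + t • u) p = 0) : eval x p = 0 := by
  set P : Polynomial K :=
    aeval (fun i => Polynomial.C (x i) + Polynomial.C (u i) * Polynomial.X) p
  have hP : ∀ t : K, P.eval t = eval (x + t • u) p := by
    intro t
    rw [← Polynomial.coe_aeval_eq_eval, ← AlgHom.comp_apply, comp_aeval, ← aeval_eq_eval]
    congr 2
    funext i
    simpa using mul_comm _ _
  have hP0 : P = 0 := Polynomial.eq_zero_of_infinite_isRoot P <| by
    simpa [Polynomial.IsRoot, hP] using Filter.frequently_cofinite_iff_infinite.1 h.frequently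
  simpa [hP0] using (hP 0).symm

lemma eventually_add_smul_ne_zero {K V : Type*} [Field K] [AddCommGroup V] [Module K V]
    {u : V} (hu : u ≠ 0) (x : V) : ∀ᶠ t : K in Filter.cofinite, x + t • u ≠ 0 := by
  refine Set.Subsingleton.finite fun s hs t ht => smul_left_injective K hu ?_
  simp only [Set.mem_compl_iff, Set.mem_ofPred_eq, not_not] at hs ht
  exact add_left_cancel (hs.trans ht.symm)

section

variable {m : ℕ}

def MmatPoly (𝒞 : Fin m → Camera) : Matrix (Fin 4) (Fin m) (LineRing m) :=
  Matrix.of fun r j => ∑ k : Fin 3, C (𝒞 j k r) * X (k, j)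

lemma map_aeval_MmatPoly (𝒞 : Fin m → Camera) (ℓ : Fin m → Vec3) :
    (MmatPoly 𝒞).map (aeval (flat ℓ)) = Mmat 𝒞 ℓ := by
  ext r j
  simp [MmatPoly, Mmat, Matrix.mulVec, dotProduct, flat]

lemma coneLMV_eq_zLocus (𝒞 : Fin m → Camera) :
    coneLMV 𝒞 = zLocus (Ideal.span (Set.range fun rc : (Fin 3 → Fin 4) × (Fin 3 → Fin m) =>
      ((MmatPoly 𝒞).submatrix rc.1 rc.2).det)) := by
  ext ℓ
  simp only [coneLMV, zLocus, Set.mem_ofPred_eq, Set.mem_preimage, zeroLocus_span,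
    Set.forall_mem_range, Prod.forall, AlgHom.map_det, AlgHom.mapMatrix_apply, ← Matrix.submatrix_map,
    map_aeval_MmatPoly]
  exact Matrix.rank_le_iff_det_submatrix_eq_zero _ 2

lemma zariskiClosure_subset_zLocus {S : Set (Fin m → Vec3)} {I : Ideal (LineRing m)}
    (h : S ⊆ zLocus I) : zariskiClosure S ⊆ zLocus I :=
  Set.preimage_mono <| zeroLocus_anti_mono <|
    le_zeroLocus_iff_le_vanishingIdeal.1 (Set.image_subset_iff.2 h)

lemma zariskiClosure_subset_coneLMV {𝒞 : Fin m → Camera} {S : Set (Fin m → Vec3)}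
    (h : S ⊆ coneLMV 𝒞) : zariskiClosure S ⊆ coneLMV 𝒞 := by
  rw [coneLMV_eq_zLocus] at h ⊢
  exact zariskiClosure_subset_zLocus h

lemma mem_zariskiClosure_of_eventually_add_smul_mem {S : Set (Fin m → Vec3)}
    {ℓ u : Fin m → Vec3} (h : ∀ᶠ t : ℂ in Filter.cofinite, ℓ + t • u ∈ S) :
    ℓ ∈ zariskiClosure S := fun _ hp =>
  eval_eq_zero_of_eventually_eval_add_smul (x := flat ℓ) (u := flat u)
    (h.mono fun _ ht => hp _ ⟨_, ht, rfl⟩)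

lemma exists_forall_add_smul_mem_coneLMV {𝒞 : Fin m → Camera} (h𝒞 : ∀ j, (𝒞 j).rank = 3)
    {ℓ : Fin m → Vec3} (hℓ : ℓ ∈ coneLMV 𝒞) :
    ∃ u : Fin m → Vec3, (∀ j, u j ≠ 0) ∧ ∀ t : ℂ, ℓ + t • u ∈ coneLMV 𝒞 := by
  obtain ⟨W, hVW, hW⟩ := exists_le_finrank_eq (k := 2)
    (p := span ℂ (Set.range (Mmat 𝒞 ℓ).col)) (by rwa [← Matrix.rank_eq_finrank_span_cols]) (by simp)
  have hu : ∀ j, ∃ u, (𝒞 j)ᵀ *ᵥ u ≠ 0 ∧ (𝒞 j)ᵀ *ᵥ u ∈ W := fun j =>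
    (𝒞 j)ᵀ.exists_mulVec_ne_zero_mem (by rw [Matrix.rank_transpose, h𝒞 j, hW]; simp)
  choose u hu0 huW using hu
  refine ⟨u, fun j h0 => hu0 j (by simp [h0]), fun t => ?_⟩
  refine (Matrix.rank_le_finrank_of_col_mem _ fun j => ?_).trans hW.le
  have hcol : (Mmat 𝒞 (ℓ + t • u)).col j = (Mmat 𝒞 ℓ).col j + t • (𝒞 j)ᵀ *ᵥ u j := by
    ext r
    simp [Mmat, Matrix.mulVec_add, Matrix.mulVec_smul]
  rw [hcol]
  exact W.add_mem (hVW (subset_span ⟨j, rfl⟩)) (W.smul_mem t (huW j))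

end

theorem zariskiClosure_nonzeroPart_cone_general {m : ℕ} (𝒞 : Fin m → Camera)
    (harr : IsCameraArrangement 𝒞) :
    zariskiClosure {ℓ | ℓ ∈ coneLMV 𝒞 ∧ ∀ i, ℓ i ≠ 0} = coneLMV 𝒞 := by
  refine (zariskiClosure_subset_coneLMV fun ℓ hℓ => hℓ.1).antisymm fun ℓ hℓ => ?_
  obtain ⟨u, hu0, hu⟩ := exists_forall_add_smul_mem_coneLMV harr.2.1 hℓ
  apply mem_zariskiClosure_of_eventually_add_smul_mem (u := u)
  filter_upwards [Filter.eventually_all.2 fun j => eventually_add_smul_ne_zero (hu0 j) (ℓ j)]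
    with t ht
  exact ⟨hu t, ht⟩

/-- **Lemma 2.2 (1).** If no four cameras are collinear, the set `X_𝒞` of points of the
cone `Ĺ_𝒞` all of whose components are nonzero is Zariski dense in `Ĺ_𝒞`. -/
theorem zariskiClosure_nonzeroPart_cone {m : ℕ} (𝒞 : Fin m → Camera)
    (harr : IsCameraArrangement 𝒞) (h4 : NoFourCollinear 𝒞) :
    zariskiClosure {ℓ | ℓ ∈ coneLMV 𝒞 ∧ ∀ i, ℓ i ≠ 0} = coneLMV 𝒞 :=
  zariskiClosure_nonzeroPart_cone_general 𝒞 harr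

end
end

section
/- A camera arrangement 𝒞 = (C_1,…,C_m) with pairwise distinct centers has the property that no three camera centers are collinear if and only if there exists h ∈ PGL_4 × PGL_3^m such that the arrangement h·𝒞 is (equal to) a center-generic translational arrangement. -/
open MvPolynomial

noncomputable section

/-- The translational camera `[I₃ | s]`. -/
def transCam (s : Vec3) : Camera :=
  Matrix.of fun (i : Fin 3) (r : Fin 4) =>
    if (r : ℕ) = (i : ℕ) then 1 else if (r : ℕ) = 3 then s i else 0

/-- The 4×m matrix of camera centers of the translational arrangement `𝒞(s)`,
whose `j`-th column is `(s_{1,j}, s_{2,j}, s_{3,j}, −1)ᵀ`. -/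
def centersMatrix {m : ℕ} (s : Fin m → Vec3) : Matrix (Fin 4) (Fin m) ℂ :=
  Matrix.of fun r j => if h : (r : ℕ) < 3 then s j ⟨r, h⟩ else -1

/-- The translational arrangement `𝒞(s)` is center-generic:
(i) `s_{i₁,j₁} − s_{i₂,j₂} ≠ 0` for all `i₁ < i₂` and all `j₁, j₂`;
(ii) all 3×3 minors of the matrix of camera centers are nonzero. -/
def CenterGeneric {m : ℕ} (s : Fin m → Vec3) : Prop :=
  (∀ i1 i2 : Fin 3, i1 < i2 → ∀ j1 j2 : Fin m, s j1 i1 - s j2 i2 ≠ 0) ∧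
  ∀ (ri : Fin 3 → Fin 4) (ci : Fin 3 → Fin m),
    Function.Injective ri → Function.Injective ci →
      ((centersMatrix s).submatrix ri ci).det ≠ 0


/-!
If no three centers are collinear, any three of the centers `c_j` are linearly independent
in `ℂ⁴`. For a Zariski-generic `H ∈ GL₄` the points `H c_j` then lie off the plane
`x₃ = 0`, and their dehomogenizations `s_j` satisfy the finitely many polynomial inequalities
of center-genericity: each inequality is a nonzero polynomial in the entries of `H`, as one
explicit (possibly singular) witness shows. Two surjective cameras with the same kernel differ
by a left factor in `GL₃`, which produces the `H_i`. Conversely, `H` carries centers to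
centers, and the nonzero `3 × 3` minors of the translational centers matrix make any three
centers linearly independent, so no line contains them.
-/

section LinearAlgebra

open Matrix Function Module

variable {K : Type*} [Field K] {m n : Type*} [Fintype m] [Fintype n]

theorem Matrix.mulVec_surjective_of_rank_eq_card {A : Matrix m n K}
    (hA : A.rank = Fintype.card m) : Surjective A.mulVec := by
  have : LinearMap.range A.mulVecLin = ⊤ :=
    Submodule.eq_top_of_finrank_eq (by rw [finrank_fintype_fun_eq_card, ← hA]; rfl)
  exact LinearMap.range_eq_top.1 this

theorem Matrix.finrank_ker_mulVecLin_eq_one {A : Matrix m n K} (hA : Surjective A.mulVec)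
    (hcard : Fintype.card n = Fintype.card m + 1) :
    finrank K (LinearMap.ker A.mulVecLin) = 1 := by
  have := LinearMap.finrank_range_add_finrank_ker A.mulVecLin
  rw [LinearMap.range_eq_top.2 hA, finrank_top, finrank_fintype_fun_eq_card,
    finrank_fintype_fun_eq_card] at this
  omega

theorem Matrix.exists_ne_zero_mulVec_eq_zero {A : Matrix m n K} (hA : Surjective A.mulVec)
    (hcard : Fintype.card n = Fintype.card m + 1) : ∃ c, c ≠ 0 ∧ A *ᵥ c = 0 := by
  have : Nontrivial (LinearMap.ker A.mulVecLin) :=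
    finrank_pos_iff.1 (by rw [finrank_ker_mulVecLin_eq_one hA hcard]; exact one_pos)
  obtain ⟨⟨c, hc⟩, hc0⟩ := exists_ne (0 : LinearMap.ker A.mulVecLin)
  exact ⟨c, fun h => hc0 (Subtype.ext h), hc⟩

theorem Matrix.exists_smul_eq_of_mulVec_eq_zero {A : Matrix m n K} (hA : Surjective A.mulVec)
    (hcard : Fintype.card n = Fintype.card m + 1) {c v : n → K} (hc0 : c ≠ 0)
    (hc : A *ᵥ c = 0) (hv : A *ᵥ v = 0) : ∃ a : K, a • c = v := by
  obtain ⟨a, ha⟩ := (finrank_eq_one_iff_of_nonzero' (⟨c, hc⟩ : LinearMap.ker A.mulVecLin)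
    (fun h => hc0 (congrArg Subtype.val h))).1 (finrank_ker_mulVecLin_eq_one hA hcard) ⟨v, hv⟩
  exact ⟨a, congrArg Subtype.val ha⟩

theorem Matrix.exists_isUnit_det_mul_eq [DecidableEq m] {A B : Matrix m n K}
    (hA : Surjective A.mulVec) (hB : Surjective B.mulVec)
    (hAB : ∀ v, A *ᵥ v = 0 → B *ᵥ v = 0) : ∃ G : Matrix m m K, IsUnit G.det ∧ G * A = B := by
  obtain ⟨R, hR⟩ := mulVec_surjective_iff_exists_right_inverse.1 hA
  have hBRA : B * R * A = B := by
    refine ext_iff_mulVec.2 fun v => ?_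
    have : A *ᵥ (R *ᵥ (A *ᵥ v) - v) = 0 := by
      rw [mulVec_sub, mulVec_mulVec, hR, one_mulVec, sub_self]
    rw [← mulVec_mulVec, ← mulVec_mulVec, ← sub_eq_zero, ← mulVec_sub]
    exact hAB _ this
  refine ⟨B * R, (isUnit_iff_isUnit_det _).1 (mulVec_surjective_iff_isUnit.1 fun y => ?_), hBRA⟩
  obtain ⟨v, rfl⟩ := hB y
  exact ⟨A *ᵥ v, by rw [mulVec_mulVec, hBRA]⟩

end LinearAlgebra

namespace MvPolynomial

variable {σ R : Type*} [CommRing R] [IsDomain R]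

/-- The filter of Zariski-generic points. -/
def genericFilter (σ R : Type*) [CommRing R] [IsDomain R] : Filter (σ → R) where
  sets := {S | ∃ p : MvPolynomial σ R, p ≠ 0 ∧ {x | eval x p ≠ 0} ⊆ S}
  univ_sets := ⟨1, one_ne_zero, Set.subset_univ _⟩
  sets_of_superset := fun ⟨p, hp, hS⟩ hST => ⟨p, hp, hS.trans hST⟩
  inter_sets := fun ⟨p, hp, hS⟩ ⟨q, hq, hT⟩ =>
    ⟨p * q, mul_ne_zero hp hq, fun x hx => by
      simp only [Set.mem_ofPred_eq, map_mul, mul_ne_zero_iff] at hx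
      exact ⟨hS hx.1, hT hx.2⟩⟩

instance [Infinite R] : (genericFilter σ R).NeBot := by
  refine ⟨fun h => ?_⟩
  obtain ⟨p, hp, hS⟩ : (∅ : Set (σ → R)) ∈ genericFilter σ R := h ▸ Filter.mem_bot
  exact hp (funext fun x => by rw [map_zero]; by_contra hx; exact hS hx)

theorem eventually_ne_zero_of_eval_eq {f : (σ → R) → R} (p : MvPolynomial σ R)
    (hpf : ∀ x, eval x p = f x) {x₀ : σ → R} (hx₀ : f x₀ ≠ 0) :
    ∀ᶠ x in genericFilter σ R, f x ≠ 0 :=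
  ⟨p, fun hp => hx₀ (by rw [← hpf, hp, map_zero]),
    fun x (hx : eval x p ≠ 0) => show f x ≠ 0 by rwa [← hpf]⟩

end MvPolynomial

section GenericMatrices

open Matrix Function Filter

theorem mvPolynomialX_map_eval_uncurry {n R : Type*} [CommRing R] (H : Matrix n n R) :
    (mvPolynomialX n n R).map (eval (uncurry H)) = H :=
  mvPolynomialX_map_eval₂ _ H

theorem eval_mvPolynomialX_mulVec {n R : Type*} [Fintype n] [CommRing R] (H : Matrix n n R)
    (v : n → R) (r : n) : eval (uncurry H) ((mvPolynomialX n n R *ᵥ (C ∘ v)) r) = (H *ᵥ v) r := by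
  rw [RingHom.map_mulVec, mvPolynomialX_map_eval_uncurry]
  congr 2
  ext k
  exact eval_C _

variable {n R : Type*} [CommRing R] [IsDomain R]

def genericMatrices (n R : Type*) [CommRing R] [IsDomain R] : Filter (Matrix n n R) :=
  (genericFilter (n × n) R).map fun x => of (curry x)

instance [Infinite R] : (genericMatrices n R).NeBot := by
  unfold genericMatrices
  infer_instance

theorem eventually_genericMatrices_ne_zero {f : Matrix n n R → R} (p : MvPolynomial (n × n) R)
    (hpf : ∀ H : Matrix n n R, eval (uncurry H) p = f H) {H₀ : Matrix n n R} (hH₀ : f H₀ ≠ 0) :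
    ∀ᶠ H in genericMatrices n R, f H ≠ 0 :=
  eventually_map.2 <|
    eventually_ne_zero_of_eval_eq p (fun x => hpf (of (curry x))) (x₀ := uncurry H₀) hH₀

variable [Fintype n]

theorem eventually_det_mulVec_ne_zero {K ι : Type*} [Field K] [Fintype ι] [DecidableEq ι]
    {w : ι → n → K} (hw : LinearIndependent K w) {ri : ι → n} (hri : Injective ri) :
    ∀ᶠ H in genericMatrices n K, (of fun a b => (H *ᵥ w b) (ri a)).det ≠ 0 := by
  obtain ⟨B, hB⟩ := mulVec_surjective_iff_exists_right_inverse.1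
    (mulVec_surjective_of_rank_eq_card (LinearIndependent.rank_matrix (M := of w) hw))
  refine eventually_genericMatrices_ne_zero
    (f := fun H => (of fun a b => (H *ᵥ w b) (ri a)).det)
    (of fun a b => (mvPolynomialX n n K *ᵥ (C ∘ w b)) (ri a)).det
    (fun H => by
      rw [RingHom.map_det]
      congr 1
      ext a b
      exact eval_mvPolynomialX_mulVec H (w b) (ri a))
    (H₀ := of (extend ri (fun a j => B j a) 0)) ?_
  -- the rows `ri` of this witness form a left inverse of the family `w`
  have : (of fun a b => (of (extend ri (fun a j => B j a) 0) *ᵥ w b) (ri a)) = (of w * B)ᵀ := by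
    ext a b
    simp only [of_apply, mulVec, dotProduct, hri.extend_apply, transpose_apply, mul_apply,
      mul_comm]
  rw [this, hB, transpose_one, det_one]
  exact one_ne_zero

variable [DecidableEq n]

theorem eventually_det_ne_zero : ∀ᶠ H in genericMatrices n R, H.det ≠ 0 :=
  eventually_genericMatrices_ne_zero (f := det) (mvPolynomialX n n R).det
    (fun H => by rw [RingHom.map_det, RingHom.mapMatrix_apply, mvPolynomialX_map_eval_uncurry])
    (H₀ := 1) (by simp)

theorem eventually_mulVec_apply_ne_zero {v : n → R} (hv : v ≠ 0) (r : n) :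
    ∀ᶠ H in genericMatrices n R, (H *ᵥ v) r ≠ 0 := by
  obtain ⟨k, hk⟩ := Function.ne_iff.1 hv
  exact eventually_genericMatrices_ne_zero _ (eval_mvPolynomialX_mulVec · v r)
    (H₀ := single r k 1) (by simpa [single_mulVec] using hk)

theorem eventually_mulVec_mul_sub_ne_zero [Infinite R] {v w : n → R} (hv : v ≠ 0) (hw : w ≠ 0)
    {i j r : n} (hij : i ≠ j) (hir : i ≠ r) (hjr : j ≠ r) :
    ∀ᶠ H in genericMatrices n R, (H *ᵥ w) j * (H *ᵥ v) r - (H *ᵥ v) i * (H *ᵥ w) r ≠ 0 := by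
  obtain ⟨H₁, hv₁, hw₁⟩ :=
    ((eventually_mulVec_apply_ne_zero hv r).and (eventually_mulVec_apply_ne_zero hw r)).exists
  -- on the rank-one witness `(e_r + e_j) ⊗ H₁ r` the expression is `(H₁ *ᵥ w) r * (H₁ *ᵥ v) r`
  refine eventually_genericMatrices_ne_zero
    ((mvPolynomialX n n R *ᵥ (C ∘ w)) j * (mvPolynomialX n n R *ᵥ (C ∘ v)) r -
      (mvPolynomialX n n R *ᵥ (C ∘ v)) i * (mvPolynomialX n n R *ᵥ (C ∘ w)) r)
    (fun H => by simp only [map_sub, map_mul, eval_mvPolynomialX_mulVec])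
    (H₀ := vecMulVec (Pi.single r 1 + Pi.single j 1) (H₁ r)) ?_
  simpa [vecMulVec_mulVec, hij, hir, hjr, hjr.symm] using
    (⟨hw₁, hv₁⟩ : H₁ r ⬝ᵥ w ≠ 0 ∧ H₁ r ⬝ᵥ v ≠ 0)

end GenericMatrices

section Cameras

open Matrix Function

def transCenter (s : Vec3) : Vec4 := fun r => if h : (r : ℕ) < 3 then s ⟨r, h⟩ else -1

theorem centersMatrix_apply {m : ℕ} (s : Fin m → Vec3) (r : Fin 4) (j : Fin m) :
    centersMatrix s r j = transCenter (s j) r :=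
  rfl

theorem transCenter_castSucc (s : Vec3) (i : Fin 3) : transCenter s i.castSucc = s i := by
  simp [transCenter]

theorem transCenter_three (s : Vec3) : transCenter s 3 = -1 :=
  rfl

theorem transCenter_ne_zero (s : Vec3) : transCenter s ≠ 0 := fun h => by
  simpa [transCenter_three] using congrFun h 3

theorem transCam_mulVec (s : Vec3) (v : Vec4) (i : Fin 3) :
    (transCam s *ᵥ v) i = v i.castSucc + s i * v 3 := by
  fin_cases i <;> simp [transCam, mulVec, dotProduct, Fin.sum_univ_four, Fin.castSucc]

theorem transCam_mulVec_transCenter (s : Vec3) : transCam s *ᵥ transCenter s = 0 := by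
  funext i
  rw [transCam_mulVec, transCenter_castSucc, transCenter_three]
  simp

theorem transCam_mulVec_surjective (s : Vec3) : Surjective (transCam s).mulVec := fun y =>
  ⟨Fin.snoc y 0, funext fun i => by
    rw [transCam_mulVec, show (3 : Fin 4) = Fin.last 3 from rfl, Fin.snoc_castSucc, Fin.snoc_last,
      mul_zero, add_zero]⟩

theorem IsCenter.left_mul {C : Camera} {c : Vec4} (hc : IsCenter C c)
    (G : Matrix (Fin 3) (Fin 3) ℂ) : IsCenter (G * C) c :=
  ⟨hc.1, by rw [← mulVec_mulVec, hc.2, mulVec_zero]⟩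

theorem IsCenter.mul_inv {C : Camera} {c : Vec4} (hc : IsCenter C c)
    {H : Matrix (Fin 4) (Fin 4) ℂ} (hH : IsUnit H.det) : IsCenter (C * H⁻¹) (H *ᵥ c) := by
  refine ⟨fun h => hc.1 ?_, ?_⟩
  · exact mulVec_injective_iff_isUnit.2 ((isUnit_iff_isUnit_det H).2 hH)
      (h.trans (mulVec_zero H).symm)
  · rw [mulVec_mulVec, Matrix.mul_assoc, nonsing_inv_mul H hH, Matrix.mul_one, hc.2]

theorem CollinearCenters.transform {m : ℕ} {𝒞 : Fin m → Camera} {S : Set (Fin m)}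
    (h : CollinearCenters 𝒞 S) {H : Matrix (Fin 4) (Fin 4) ℂ} (hH : IsUnit H.det)
    (G : Fin m → Matrix (Fin 3) (Fin 3) ℂ) : CollinearCenters (fun i => G i * 𝒞 i * H⁻¹) S := by
  obtain ⟨W, hW, hcW⟩ := h
  refine ⟨W.map H.mulVecLin, (Submodule.finrank_map_le _ _).trans hW, fun i hi => ?_⟩
  obtain ⟨c, hc, hcW⟩ := hcW i hi
  exact ⟨H *ᵥ c, (hc.left_mul (G i)).mul_inv hH, Submodule.mem_map_of_mem hcW⟩

theorem not_collinearCenters_transCam {m : ℕ} {s : Fin m → Vec3} (hs : CenterGeneric s)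
    {S : Finset (Fin m)} (hS : S.card = 3) :
    ¬ CollinearCenters (fun i => transCam (s i)) S := by
  rintro ⟨W, hW, hcW⟩
  set ci := S.orderEmbOfFin hS
  have hindep : LinearIndependent ℂ fun t => transCenter (s (ci t)) :=
    LinearIndependent.of_comp (LinearMap.funLeft ℂ ℂ Fin.castSucc)
      (linearIndependent_cols_of_det_ne_zero
        (hs.2 _ _ (Fin.castSucc_injective 3) ci.injective))
  have hmem : ∀ t, transCenter (s (ci t)) ∈ W := fun t => by
    obtain ⟨c, hc, hcW⟩ := hcW _ (S.orderEmbOfFin_mem hS t)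
    obtain ⟨a, rfl⟩ := exists_smul_eq_of_mulVec_eq_zero (transCam_mulVec_surjective _) rfl
      (transCenter_ne_zero _) (transCam_mulVec_transCenter _) hc.2
    exact (Submodule.smul_mem_iff W (left_ne_zero_of_smul hc.1)).1 hcW
  have := Submodule.finrank_mono (Submodule.span_le.2 (Set.range_subset_iff.2 hmem))
  rw [finrank_span_eq_card hindep, Fintype.card_fin] at this
  omega

theorem linearIndependent_of_not_collinearCenters {m : ℕ} {𝒞 : Fin m → Camera}
    {c : Fin m → Vec4} (hc : ∀ j, IsCenter (𝒞 j) (c j)) (ci : Fin 3 → Fin m)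
    (h : ¬ CollinearCenters 𝒞 (Set.range ci)) : LinearIndependent ℂ (c ∘ ci) := by
  by_contra hdep
  refine h ⟨Submodule.span ℂ (Set.range (c ∘ ci)), ?_, ?_⟩
  · have hle := finrank_range_le_card (R := ℂ) (c ∘ ci)
    have hne := mt linearIndependent_iff_card_eq_finrank_span.2 hdep
    rw [Fintype.card_fin] at hle hne
    exact Nat.le_of_lt_succ (lt_of_le_of_ne hle (Ne.symm hne))
  · rintro _ ⟨t, rfl⟩
    exact ⟨c (ci t), hc (ci t), Submodule.subset_span ⟨t, rfl⟩⟩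

def dehomogenize (d : Vec4) : Vec3 := fun i => -d i.castSucc / d 3

theorem transCenter_dehomogenize {d : Vec4} (hd : d 3 ≠ 0) :
    transCenter (dehomogenize d) = (-d 3)⁻¹ • d := by
  funext r
  refine Fin.lastCases ?_ (fun i => ?_) r
  · rw [show Fin.last 3 = 3 from rfl, transCenter_three]
    simp [hd]
  · rw [transCenter_castSucc]
    simp only [dehomogenize, Pi.smul_apply, smul_eq_mul]
    field_simp

theorem transCam_dehomogenize_mulVec_self {d : Vec4} (hd : d 3 ≠ 0) :
    transCam (dehomogenize d) *ᵥ d = 0 := by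
  have := transCam_mulVec_transCenter (dehomogenize d)
  rwa [transCenter_dehomogenize hd, mulVec_smul, smul_eq_zero,
    or_iff_right (inv_ne_zero (neg_ne_zero.2 hd))] at this

theorem centerGeneric_dehomogenize {m : ℕ} {d : Fin m → Vec4} (h3 : ∀ j, d j 3 ≠ 0)
    (hdiff : ∀ i1 i2 : Fin 3, i1 ≠ i2 → ∀ j1 j2,
      d j2 i2.castSucc * d j1 3 - d j1 i1.castSucc * d j2 3 ≠ 0)
    (hminor : ∀ (ri : Fin 3 → Fin 4) (ci : Fin 3 → Fin m), Injective ri → Injective ci →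
      ((of fun r j => d j r).submatrix ri ci).det ≠ 0) :
    CenterGeneric fun j => dehomogenize (d j) := by
  refine ⟨fun i1 i2 hi j1 j2 => ?_, fun ri ci hri hci => ?_⟩
  · have : dehomogenize (d j1) i1 - dehomogenize (d j2) i2 =
        (d j2 i2.castSucc * d j1 3 - d j1 i1.castSucc * d j2 3) / (d j1 3 * d j2 3) := by
      have := h3 j1
      have := h3 j2
      simp only [dehomogenize]
      field_simp
      ring
    rw [this]
    exact div_ne_zero (hdiff i1 i2 hi.ne j1 j2) (mul_ne_zero (h3 j1) (h3 j2))
  · have : (centersMatrix fun j => dehomogenize (d j)).submatrix ri ci =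
        (of fun r j => d j r).submatrix ri ci * diagonal fun b => (-d (ci b) 3)⁻¹ := by
      ext a b
      rw [mul_diagonal, submatrix_apply, centersMatrix_apply, transCenter_dehomogenize (h3 _)]
      simp [mul_comm]
    rw [this, det_mul, det_diagonal]
    exact mul_ne_zero (hminor ri ci hri hci)
      (Finset.prod_ne_zero_iff.2 fun b _ => inv_ne_zero (neg_ne_zero.2 (h3 _)))

end Cameras

section Arrangements

open Matrix Function Filter

theorem exists_generic_matrix {m : ℕ} {c : Fin m → Vec4} (hc : ∀ j, c j ≠ 0)
    (hindep : ∀ ci : Fin 3 → Fin m, Injective ci → LinearIndependent ℂ (c ∘ ci)) :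
    ∃ H : Matrix (Fin 4) (Fin 4) ℂ, IsUnit H.det ∧ (∀ j, (H *ᵥ c j) 3 ≠ 0) ∧
      (∀ i1 i2 : Fin 3, i1 ≠ i2 → ∀ j1 j2,
        (H *ᵥ c j2) i2.castSucc * (H *ᵥ c j1) 3 - (H *ᵥ c j1) i1.castSucc * (H *ᵥ c j2) 3 ≠ 0) ∧
      ∀ (ri : Fin 3 → Fin 4) (ci : Fin 3 → Fin m), Injective ri → Injective ci →
        ((of fun r j => (H *ᵥ c j) r).submatrix ri ci).det ≠ 0 := by
  have hcast : ∀ i : Fin 3, i.castSucc ≠ 3 := fun i => (Fin.castSucc_lt_last i).ne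
  have hdiff : ∀ᶠ H in genericMatrices (Fin 4) ℂ, ∀ i1 i2 : Fin 3, i1 ≠ i2 → ∀ j1 j2,
      (H *ᵥ c j2) i2.castSucc * (H *ᵥ c j1) 3 - (H *ᵥ c j1) i1.castSucc * (H *ᵥ c j2) 3 ≠ 0 := by
    simp only [eventually_all]
    exact fun i1 i2 hi j1 j2 => eventually_mulVec_mul_sub_ne_zero (hc j1) (hc j2)
      ((Fin.castSucc_injective 3).ne hi) (hcast i1) (hcast i2)
  have hminor : ∀ᶠ H in genericMatrices (Fin 4) ℂ,
      ∀ (ri : Fin 3 → Fin 4) (ci : Fin 3 → Fin m), Injective ri → Injective ci →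
        ((of fun r j => (H *ᵥ c j) r).submatrix ri ci).det ≠ 0 := by
    simp only [eventually_all]
    exact fun ri ci hri hci => eventually_det_mulVec_ne_zero (hindep ci hci) hri
  obtain ⟨H, hdet, h3, hH⟩ := (eventually_det_ne_zero.and
    ((eventually_all.2 fun j => eventually_mulVec_apply_ne_zero (hc j) 3).and
      (hdiff.and hminor))).exists
  exact ⟨H, isUnit_iff_ne_zero.2 hdet, h3, hH⟩

theorem exists_transform_centerGeneric {m : ℕ} {𝒞 : Fin m → Camera}
    (hrank : ∀ i, (𝒞 i).rank = 3)
    (hno3 : ∀ S : Finset (Fin m), S.card = 3 → ¬ CollinearCenters 𝒞 ↑S) :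
    ∃ (H : Matrix (Fin 4) (Fin 4) ℂ) (Hi : Fin m → Matrix (Fin 3) (Fin 3) ℂ),
      IsUnit H.det ∧ (∀ i, IsUnit (Hi i).det) ∧
      ∃ s : Fin m → Vec3, CenterGeneric s ∧ ∀ i, Hi i * 𝒞 i * H⁻¹ = transCam (s i) := by
  choose c hc0 hc using fun j =>
    exists_ne_zero_mulVec_eq_zero (mulVec_surjective_of_rank_eq_card (hrank j)) rfl
  have hcenter : ∀ j, IsCenter (𝒞 j) (c j) := fun j => ⟨hc0 j, hc j⟩
  have hindep : ∀ ci : Fin 3 → Fin m, Injective ci → LinearIndependent ℂ (c ∘ ci) :=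
    fun ci hci => linearIndependent_of_not_collinearCenters hcenter ci <| by
      simpa using hno3 (Finset.univ.image ci) (by rw [Finset.card_image_of_injective _ hci]; rfl)
  obtain ⟨H, hH, h3, hdiff, hminor⟩ := exists_generic_matrix hc0 hindep
  have hsurj : ∀ j, Surjective (𝒞 j * H⁻¹).mulVec := fun j =>
    mulVec_surjective_of_rank_eq_card <| by
      rw [rank_mul_eq_left_of_isUnit_det _ _ (isUnit_nonsing_inv_det H hH), hrank]
      rfl
  have hker : ∀ j v, (𝒞 j * H⁻¹) *ᵥ v = 0 → transCam (dehomogenize (H *ᵥ c j)) *ᵥ v = 0 := by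
    intro j v hv
    have hcH := (hcenter j).mul_inv hH
    obtain ⟨a, rfl⟩ := exists_smul_eq_of_mulVec_eq_zero (hsurj j) rfl hcH.1 hcH.2 hv
    rw [mulVec_smul, transCam_dehomogenize_mulVec_self (h3 j), smul_zero]
  choose Hi hHi hHiC using fun j =>
    exists_isUnit_det_mul_eq (hsurj j) (transCam_mulVec_surjective _) (hker j)
  exact ⟨H, Hi, hH, hHi, _, centerGeneric_dehomogenize h3 hdiff hminor,
    fun j => by rw [Matrix.mul_assoc, hHiC]⟩

end Arrangements

/-- **Proposition 4.2.** A camera arrangement has no three collinear camera centers if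
and only if some element `h = (H, H₁, …, H_m) ∈ PGL₄ × PGL₃^m` transforms it into a
center-generic translational arrangement. -/
theorem noThreeCollinear_iff_equivalent_centerGeneric {m : ℕ} (𝒞 : Fin m → Camera)
    (harr : IsCameraArrangement 𝒞) :
    (∀ S : Finset (Fin m), S.card = 3 → ¬ CollinearCenters 𝒞 ↑S) ↔
      ∃ (H : Matrix (Fin 4) (Fin 4) ℂ) (Hi : Fin m → Matrix (Fin 3) (Fin 3) ℂ),
        IsUnit H.det ∧ (∀ i, IsUnit (Hi i).det) ∧
        ∃ s : Fin m → Vec3, CenterGeneric s ∧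
          ∀ i, Hi i * 𝒞 i * H⁻¹ = transCam (s i) := by
  refine ⟨exists_transform_centerGeneric harr.2.1, ?_⟩
  rintro ⟨H, Hi, hH, -, s, hs, hC⟩ S hS hcol
  have htransl : (fun i => Hi i * 𝒞 i * H⁻¹) = fun i => transCam (s i) := funext hC
  exact not_collinearCenters_transCam hs hS (htransl ▸ hcol.transform hH Hi)

end
end

section
/- Let L and L′ be two disjoint lines in ℙ³, let c_1, c_2, c_3 ∈ L be distinct points, and let A_1, A_2, A_3 be lines such that c_i ∈ A_i for i = 1, 2, 3 and each A_i meets the line L′. Then there is a unique quadric surface in ℙ³ containing L, L′, A_1, A_2 and A_3 if and only if at least two of the lines A_i are disjoint. -/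
/-!
Statement 12: Let `L, L'` be disjoint lines in ℙ³, `c₁, c₂, c₃ ∈ L` distinct points and
`A₁, A₂, A₃` lines with `cᵢ ∈ Aᵢ` each meeting `L'`.  There is a unique quadric
containing `L, L', A₁, A₂, A₃` iff at least two of the `Aᵢ` are disjoint.
-/

noncomputable section

/-- A line in ℙ³ is (the projectivization of) a 2-dimensional subspace of ℂ⁴. -/
def IsProjLine (W : Submodule ℂ Vec4) : Prop := Module.finrank ℂ W = 2

/-- A quadratic form `q` vanishes on (the projectivization of) a subspace `W`,
i.e. the corresponding quadric surface contains the corresponding projective set. -/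
def QuadContains (q : QuadraticForm ℂ Vec4) (W : Submodule ℂ Vec4) : Prop :=
  ∀ x ∈ W, q x = 0

namespace Quadric53

open Submodule Module

/-- The quadratic form `x ↦ f x * g x`. -/
def pq (f g : Vec4 →ₗ[ℂ] ℂ) : QuadraticForm ℂ Vec4 :=
  LinearMap.BilinMap.toQuadraticMap (f.smulRight g)

@[simp] lemma pq_apply (f g : Vec4 →ₗ[ℂ] ℂ) (x : Vec4) : pq f g x = f x * g x := by
  simp [pq, LinearMap.BilinMap.toQuadraticMap_apply, smul_eq_mul]

lemma range_pair (x y : Vec4) : Set.range ![x, y] = {x, y} := by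
  ext z; simp [Fin.exists_fin_two, or_comm]

lemma indep_pair_of_span_ne {x y : Vec4} (hx : x ≠ 0) (hy : y ≠ 0)
    (h : (ℂ ∙ x) ≠ (ℂ ∙ y)) : LinearIndependent ℂ ![x, y] := by
  rw [linearIndependent_fin2]
  refine ⟨by simpa using hy, fun a ha => ?_⟩
  simp only [Matrix.cons_val_one, Matrix.head_cons, Matrix.cons_val_zero] at ha
  apply h
  have ha0 : a ≠ 0 := by rintro rfl; simp at ha; exact hx ha.symm
  rw [← ha, Submodule.span_singleton_smul_eq (IsUnit.mk0 a ha0)]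

lemma indep_cross {L L' : Submodule ℂ Vec4} (hLL' : L ⊓ L' = ⊥)
    {x y : Vec4} (hx : x ∈ L) (hy : y ∈ L') (hx0 : x ≠ 0) (hy0 : y ≠ 0) :
    LinearIndependent ℂ ![x, y] := by
  rw [linearIndependent_fin2]
  refine ⟨by simpa using hy0, fun a ha => ?_⟩
  simp only [Matrix.cons_val_one, Matrix.head_cons, Matrix.cons_val_zero] at ha
  apply hx0
  have : x ∈ L ⊓ L' := ⟨hx, by rw [← ha]; exact smul_mem _ _ hy⟩
  rw [hLL'] at this; simpa using this

lemma span_pair_eq {W : Submodule ℂ Vec4} (hW : Module.finrank ℂ W = 2)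
    {x y : Vec4} (hx : x ∈ W) (hy : y ∈ W) (hind : LinearIndependent ℂ ![x, y]) :
    W = span ℂ {x, y} := by
  symm
  apply Submodule.eq_of_le_of_finrank_le
  · rw [span_le]; rintro z hz
    rcases hz with rfl | hz
    · exact hx
    · simp at hz; subst hz; exact hy
  · rw [hW, ← range_pair x y, finrank_span_eq_card hind]; simp

lemma sup_eq_top {L L' : Submodule ℂ Vec4} (hL : Module.finrank ℂ L = 2)
    (hL' : Module.finrank ℂ L' = 2) (hLL' : L ⊓ L' = ⊥) : L ⊔ L' = ⊤ := by
  apply Submodule.eq_top_of_finrank_eq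
  have h := Submodule.finrank_sup_add_finrank_inf_eq L L'
  rw [hLL', hL, hL'] at h
  simp at h
  rw [h]; simp

/-- Coordinates 2 and 3 of an element of `L` vanish. -/
lemma coord_mem_left {L L' : Submodule ℂ Vec4} (hLL' : L ⊓ L' = ⊥)
    (b : Basis (Fin 4) ℂ Vec4) (h0 : b 0 ∈ L) (h1 : b 1 ∈ L) (h2 : b 2 ∈ L') (h3 : b 3 ∈ L')
    {x : Vec4} (hx : x ∈ L) : b.repr x 2 = 0 ∧ b.repr x 3 = 0 := by
  have hx4 : b.repr x 0 • b 0 + b.repr x 1 • b 1 + b.repr x 2 • b 2 + b.repr x 3 • b 3 = x := by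
    have := b.sum_repr x
    rwa [Fin.sum_univ_four] at this
  have hz : b.repr x 2 • b 2 + b.repr x 3 • b 3 ∈ L' :=
    add_mem (smul_mem _ _ h2) (smul_mem _ _ h3)
  have hzL : b.repr x 2 • b 2 + b.repr x 3 • b 3 ∈ L := by
    set a0 := b.repr x 0; set a1 := b.repr x 1; set a2 := b.repr x 2; set a3 := b.repr x 3
    have heq : a2 • b 2 + a3 • b 3 = x - (a0 • b 0 + a1 • b 1) := by
      rw [← hx4]; abel
    rw [heq]
    exact sub_mem hx (add_mem (smul_mem _ _ h0) (smul_mem _ _ h1))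
  have hzero : b.repr x 2 • b 2 + b.repr x 3 • b 3 = 0 := by
    have : b.repr x 2 • b 2 + b.repr x 3 • b 3 ∈ L ⊓ L' := ⟨hzL, hz⟩
    rw [hLL'] at this; simpa using this
  constructor
  · have := congrArg (fun v => b.repr v 2) hzero
    simpa [Finsupp.single_apply] using this
  · have := congrArg (fun v => b.repr v 3) hzero
    simpa [Finsupp.single_apply] using this

lemma coord_mem_right {L L' : Submodule ℂ Vec4} (hLL' : L ⊓ L' = ⊥)
    (b : Basis (Fin 4) ℂ Vec4) (h0 : b 0 ∈ L) (h1 : b 1 ∈ L) (h2 : b 2 ∈ L') (h3 : b 3 ∈ L')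
    {x : Vec4} (hx : x ∈ L') : b.repr x 0 = 0 ∧ b.repr x 1 = 0 := by
  have hx4 : b.repr x 0 • b 0 + b.repr x 1 • b 1 + b.repr x 2 • b 2 + b.repr x 3 • b 3 = x := by
    have := b.sum_repr x
    rwa [Fin.sum_univ_four] at this
  have hz : b.repr x 0 • b 0 + b.repr x 1 • b 1 ∈ L :=
    add_mem (smul_mem _ _ h0) (smul_mem _ _ h1)
  have hzL : b.repr x 0 • b 0 + b.repr x 1 • b 1 ∈ L' := by
    set a0 := b.repr x 0; set a1 := b.repr x 1; set a2 := b.repr x 2; set a3 := b.repr x 3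
    have heq : a0 • b 0 + a1 • b 1 = x - (a2 • b 2 + a3 • b 3) := by
      rw [← hx4]; abel
    rw [heq]
    exact sub_mem hx (add_mem (smul_mem _ _ h2) (smul_mem _ _ h3))
  have hzero : b.repr x 0 • b 0 + b.repr x 1 • b 1 = 0 := by
    have : b.repr x 0 • b 0 + b.repr x 1 • b 1 ∈ L ⊓ L' := ⟨hz, hzL⟩
    rw [hLL'] at this; simpa using this
  constructor
  · have := congrArg (fun v => b.repr v 0) hzero
    simpa [Finsupp.single_apply] using this
  · have := congrArg (fun v => b.repr v 1) hzero
    simpa [Finsupp.single_apply] using this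

/-- Expansion of a quadratic form vanishing on the spans of `b 0, b 1` and `b 2, b 3`. -/
lemma quad_expand (q : QuadraticForm ℂ Vec4) (b : Basis (Fin 4) ℂ Vec4)
    (h0 : q (b 0) = 0) (h1 : q (b 1) = 0) (h2 : q (b 2) = 0) (h3 : q (b 3) = 0)
    (h01 : q (b 0 + b 1) = 0) (h23 : q (b 2 + b 3) = 0) (x : Vec4) :
    q x = q (b 0 + b 2) * (b.repr x 0 * b.repr x 2)
        + q (b 0 + b 3) * (b.repr x 0 * b.repr x 3)
        + q (b 1 + b 2) * (b.repr x 1 * b.repr x 2)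
        + q (b 1 + b 3) * (b.repr x 1 * b.repr x 3) := by
  have hadd : ∀ y z : Vec4, q (y + z) = q y + q z + QuadraticMap.polar q y z := by
    intro y z; simp [QuadraticMap.polar]
  have hx4 : x = b.repr x 0 • b 0 + b.repr x 1 • b 1 + b.repr x 2 • b 2 + b.repr x 3 • b 3 := by
    have := b.sum_repr x
    rw [Fin.sum_univ_four] at this
    exact this.symm
  have hp : ∀ y z : Vec4, QuadraticMap.polar q y z = q (y + z) - q y - q z := fun y z => rfl
  conv_lhs => rw [hx4]
  rw [hadd, hadd, hadd]
  simp only [QuadraticMap.polar_add_left, QuadraticMap.polar_smul_left,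
    QuadraticMap.polar_smul_right, QuadraticMap.map_smul, smul_eq_mul]
  rw [hp (b 0) (b 1), hp (b 0) (b 2), hp (b 0) (b 3), hp (b 1) (b 2), hp (b 1) (b 3),
    hp (b 2) (b 3)]
  rw [h0, h1, h2, h3, h01, h23]
  ring

lemma aux_exists_unique
    (L L' : Submodule ℂ Vec4) (hL : IsProjLine L) (hL' : IsProjLine L') (hLL' : L ⊓ L' = ⊥)
    (c₁ c₂ c₃ : Vec4) (hc₁ : c₁ ∈ L) (hc₂ : c₂ ∈ L) (hc₃ : c₃ ∈ L)
    (hc10 : c₁ ≠ 0) (hc20 : c₂ ≠ 0) (hc30 : c₃ ≠ 0)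
    (h12 : (ℂ ∙ c₁) ≠ (ℂ ∙ c₂)) (h13 : (ℂ ∙ c₁) ≠ (ℂ ∙ c₃)) (h23 : (ℂ ∙ c₂) ≠ (ℂ ∙ c₃))
    (A₁ A₂ A₃ : Submodule ℂ Vec4)
    (hA₁ : IsProjLine A₁) (hA₂ : IsProjLine A₂) (hA₃ : IsProjLine A₃)
    (hcA₁ : c₁ ∈ A₁) (hcA₂ : c₂ ∈ A₂) (hcA₃ : c₃ ∈ A₃)
    (hAL₁ : A₁ ⊓ L' ≠ ⊥) (hAL₂ : A₂ ⊓ L' ≠ ⊥) (hAL₃ : A₃ ⊓ L' ≠ ⊥)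
    (hdisj : A₁ ⊓ A₂ = ⊥) :
    ∃ q : QuadraticForm ℂ Vec4, q ≠ 0 ∧ QuadContains q L ∧ QuadContains q L' ∧
      QuadContains q A₁ ∧ QuadContains q A₂ ∧ QuadContains q A₃ ∧
      ∀ q' : QuadraticForm ℂ Vec4, q' ≠ 0 → QuadContains q' L → QuadContains q' L' →
        QuadContains q' A₁ → QuadContains q' A₂ → QuadContains q' A₃ →
          ∃ a : ℂ, q' = a • q := by
  obtain ⟨d₁, hd₁, hd₁0⟩ := (Submodule.ne_bot_iff _).mp hAL₁
  obtain ⟨d₂, hd₂, hd₂0⟩ := (Submodule.ne_bot_iff _).mp hAL₂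
  obtain ⟨d₃, hd₃, hd₃0⟩ := (Submodule.ne_bot_iff _).mp hAL₃
  obtain ⟨hd₁A, hd₁L'⟩ := hd₁
  obtain ⟨hd₂A, hd₂L'⟩ := hd₂
  obtain ⟨hd₃A, hd₃L'⟩ := hd₃
  have hdind : LinearIndependent ℂ ![d₁, d₂] := by
    rw [linearIndependent_fin2]
    refine ⟨by simpa using hd₂0, fun a ha => ?_⟩
    simp only [Matrix.cons_val_one, Matrix.head_cons, Matrix.cons_val_zero] at ha
    apply hd₁0
    have : d₁ ∈ A₁ ⊓ A₂ := ⟨hd₁A, by rw [← ha]; exact Submodule.smul_mem _ _ hd₂A⟩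
    rw [hdisj] at this; simpa using this
  have hcind : LinearIndependent ℂ ![c₁, c₂] := indep_pair_of_span_ne hc10 hc20 h12
  have hLspan : L = span ℂ {c₁, c₂} := span_pair_eq hL hc₁ hc₂ hcind
  have hL'span : L' = span ℂ {d₁, d₂} := span_pair_eq hL' hd₁L' hd₂L' hdind
  have htop : ⊤ ≤ span ℂ (Set.range ![c₁, c₂, d₁, d₂]) := by
    have hr : Set.range ![c₁, c₂, d₁, d₂] = ({c₁, c₂} : Set Vec4) ∪ {d₁, d₂} := by
      ext z
      simp [Matrix.range_cons, Matrix.range_empty]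
      tauto
    rw [hr, Submodule.span_union, ← hLspan, ← hL'span, sup_eq_top hL hL' hLL']
  have hcard : Fintype.card (Fin 4) = Module.finrank ℂ Vec4 := by simp
  set b : Basis (Fin 4) ℂ Vec4 := basisOfTopLeSpanOfCardEqFinrank ![c₁, c₂, d₁, d₂] htop hcard
    with hbdef
  have hb : ⇑b = ![c₁, c₂, d₁, d₂] := coe_basisOfTopLeSpanOfCardEqFinrank _ _ _
  have hb0 : b 0 = c₁ := by rw [hb]; rfl
  have hb1 : b 1 = c₂ := by rw [hb]; rfl
  have hb2 : b 2 = d₁ := by rw [hb]; rfl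
  have hb3 : b 3 = d₂ := by rw [hb]; rfl
  obtain ⟨s, t, hst⟩ := Submodule.mem_span_pair.mp (hLspan ▸ hc₃)
  have hs : s ≠ 0 := by
    rintro rfl
    simp only [zero_smul, zero_add] at hst
    have ht0 : t ≠ 0 := by rintro rfl; simp at hst; exact hc30 hst.symm
    exact h23 (by rw [← hst, Submodule.span_singleton_smul_eq (IsUnit.mk0 t ht0) c₂])
  have ht : t ≠ 0 := by
    rintro rfl
    simp only [zero_smul, add_zero] at hst
    exact h13 (by rw [← hst, Submodule.span_singleton_smul_eq (IsUnit.mk0 s hs) c₁])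
  obtain ⟨lam, mu, hlm⟩ := Submodule.mem_span_pair.mp (hL'span ▸ hd₃L')
  have hlm0 : ¬(lam = 0 ∧ mu = 0) := by
    rintro ⟨rfl, rfl⟩; simp at hlm; exact hd₃0 hlm.symm
  set q : QuadraticForm ℂ Vec4 :=
    (t * lam) • pq (b.coord 0) (b.coord 3) + (-(s * mu)) • pq (b.coord 1) (b.coord 2) with hqdef
  have hqeval : ∀ x : Vec4, q x
      = (t * lam) * (b.repr x 0 * b.repr x 3) - (s * mu) * (b.repr x 1 * b.repr x 2) := by
    intro x
    rw [hqdef, QuadraticMap.add_apply, QuadraticMap.smul_apply, QuadraticMap.smul_apply,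
      pq_apply, pq_apply, Basis.coord_apply, Basis.coord_apply, Basis.coord_apply,
      Basis.coord_apply, smul_eq_mul, smul_eq_mul]
    ring
  have hq0 : q ≠ 0 := by
    intro h
    rcases not_and_or.mp hlm0 with hl | hm
    · have e1 : q (b 0 + b 3) = t * lam := by
        rw [hqeval]; simp [Finsupp.single_apply]
      rw [h] at e1
      simp at e1
      tauto
    · have e1 : q (b 1 + b 2) = -(s * mu) := by
        rw [hqeval]; simp [Finsupp.single_apply]
      rw [h] at e1
      simp at e1
      tauto
  have hqL : QuadContains q L := by
    intro x hx
    obtain ⟨e2, e3⟩ := coord_mem_left hLL' b (by rw [hb0]; exact hc₁) (by rw [hb1]; exact hc₂)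
      (by rw [hb2]; exact hd₁L') (by rw [hb3]; exact hd₂L') hx
    rw [hqeval, e2, e3]; ring
  have hqL' : QuadContains q L' := by
    intro x hx
    obtain ⟨e0, e1⟩ := coord_mem_right hLL' b (by rw [hb0]; exact hc₁) (by rw [hb1]; exact hc₂)
      (by rw [hb2]; exact hd₁L') (by rw [hb3]; exact hd₂L') hx
    rw [hqeval, e0, e1]; ring
  have hA1span : A₁ = span ℂ {c₁, d₁} :=
    span_pair_eq hA₁ hcA₁ hd₁A (indep_cross hLL' hc₁ hd₁L' hc10 hd₁0)
  have hA2span : A₂ = span ℂ {c₂, d₂} :=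
    span_pair_eq hA₂ hcA₂ hd₂A (indep_cross hLL' hc₂ hd₂L' hc20 hd₂0)
  have hA3span : A₃ = span ℂ {c₃, d₃} :=
    span_pair_eq hA₃ hcA₃ hd₃A (indep_cross hLL' hc₃ hd₃L' hc30 hd₃0)
  have hqA1 : QuadContains q A₁ := by
    intro x hx
    rw [hA1span] at hx
    obtain ⟨a, e, hae⟩ := Submodule.mem_span_pair.mp hx
    rw [← hae, hqeval, ← hb0, ← hb2]
    simp [Finsupp.single_apply]
  have hqA2 : QuadContains q A₂ := by
    intro x hx
    rw [hA2span] at hx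
    obtain ⟨a, e, hae⟩ := Submodule.mem_span_pair.mp hx
    rw [← hae, hqeval, ← hb1, ← hb3]
    simp [Finsupp.single_apply]
  have hqA3 : QuadContains q A₃ := by
    intro x hx
    rw [hA3span] at hx
    obtain ⟨a, e, hae⟩ := Submodule.mem_span_pair.mp hx
    rw [← hae, hqeval, ← hst, ← hlm, ← hb0, ← hb1, ← hb2, ← hb3]
    simp [Finsupp.single_apply]
    ring
  refine ⟨q, hq0, hqL, hqL', hqA1, hqA2, hqA3, ?_⟩
  intro q' hq'0 hq'L hq'L' hq'A1 hq'A2 hq'A3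
  have hexp := quad_expand q' b
    (by rw [hb0]; exact hq'L c₁ hc₁)
    (by rw [hb1]; exact hq'L c₂ hc₂)
    (by rw [hb2]; exact hq'L' d₁ hd₁L')
    (by rw [hb3]; exact hq'L' d₂ hd₂L')
    (by rw [hb0, hb1]; exact hq'L _ (add_mem hc₁ hc₂))
    (by rw [hb2, hb3]; exact hq'L' _ (add_mem hd₁L' hd₂L'))
  have hP02 : q' (b 0 + b 2) = 0 := by
    rw [hb0, hb2]; exact hq'A1 _ (add_mem hcA₁ hd₁A)
  have hP13 : q' (b 1 + b 3) = 0 := by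
    rw [hb1, hb3]; exact hq'A2 _ (add_mem hcA₂ hd₂A)
  have hx34 : c₃ + d₃ = s • b 0 + t • b 1 + lam • b 2 + mu • b 3 := by
    rw [hb0, hb1, hb2, hb3, add_assoc (s • c₁ + t • c₂), hst, hlm]
  have hr0 : b.repr (c₃ + d₃) 0 = s := by rw [hx34]; simp [Finsupp.single_apply]
  have hr1 : b.repr (c₃ + d₃) 1 = t := by rw [hx34]; simp [Finsupp.single_apply]
  have hr2 : b.repr (c₃ + d₃) 2 = lam := by rw [hx34]; simp [Finsupp.single_apply]
  have hr3 : b.repr (c₃ + d₃) 3 = mu := by rw [hx34]; simp [Finsupp.single_apply]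
  have h0' : q' (c₃ + d₃) = 0 := hq'A3 _ (add_mem hcA₃ hd₃A)
  have hkey : q' (b 0 + b 3) * (s * mu) + q' (b 1 + b 2) * (t * lam) = 0 := by
    have h := hexp (c₃ + d₃)
    rw [h0', hr0, hr1, hr2, hr3, hP02, hP13] at h
    linear_combination -h
  by_cases hmu : mu = 0
  · have hlam : lam ≠ 0 := fun h => hlm0 ⟨h, hmu⟩
    have hP12 : q' (b 1 + b 2) = 0 := by
      rw [hmu] at hkey
      simp at hkey
      rcases hkey with h | h | h
      · exact h
      · exact absurd h ht
      · exact absurd h hlam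
    have hcanc : q' (b 0 + b 3) / (t * lam) * (t * lam) = q' (b 0 + b 3) :=
      div_mul_cancel₀ _ (mul_ne_zero ht hlam)
    refine ⟨q' (b 0 + b 3) / (t * lam), ?_⟩
    ext x
    rw [hexp x, QuadraticMap.smul_apply, hqeval x, hP02, hP13, hP12, smul_eq_mul, hmu]
    linear_combination (-(b.repr x 0 * b.repr x 3)) * hcanc
  · have hcanc : -(q' (b 1 + b 2)) / (s * mu) * (s * mu) = -(q' (b 1 + b 2)) :=
      div_mul_cancel₀ _ (mul_ne_zero hs hmu)
    refine ⟨-(q' (b 1 + b 2)) / (s * mu), ?_⟩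
    have hP03 : q' (b 0 + b 3) = -(q' (b 1 + b 2)) * (t * lam) / (s * mu) := by
      rw [eq_div_iff (mul_ne_zero hs hmu)]
      linear_combination hkey
    ext x
    rw [hexp x, QuadraticMap.smul_apply, hqeval x, hP02, hP13, hP03, smul_eq_mul]
    linear_combination (b.repr x 1 * b.repr x 2) * hcanc

lemma aux_not_unique
    (L L' : Submodule ℂ Vec4) (hL : IsProjLine L) (hL' : IsProjLine L') (hLL' : L ⊓ L' = ⊥)
    (c₁ c₂ c₃ : Vec4) (hc₁ : c₁ ∈ L) (hc₂ : c₂ ∈ L) (hc₃ : c₃ ∈ L)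
    (hc10 : c₁ ≠ 0) (hc20 : c₂ ≠ 0) (hc30 : c₃ ≠ 0)
    (h12 : (ℂ ∙ c₁) ≠ (ℂ ∙ c₂)) (h13 : (ℂ ∙ c₁) ≠ (ℂ ∙ c₃))
    (A₁ A₂ A₃ : Submodule ℂ Vec4)
    (hA₁ : IsProjLine A₁) (hA₂ : IsProjLine A₂) (hA₃ : IsProjLine A₃)
    (hcA₁ : c₁ ∈ A₁) (hcA₂ : c₂ ∈ A₂) (hcA₃ : c₃ ∈ A₃)
    (hAL₁ : A₁ ⊓ L' ≠ ⊥) (hAL₂ : A₂ ⊓ L' ≠ ⊥) (hAL₃ : A₃ ⊓ L' ≠ ⊥)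
    (h12n : A₁ ⊓ A₂ ≠ ⊥) (h13n : A₁ ⊓ A₃ ≠ ⊥) :
    ∃ q₁ q₂ : QuadraticForm ℂ Vec4, q₁ ≠ 0 ∧ q₂ ≠ 0 ∧
      QuadContains q₁ L ∧ QuadContains q₁ L' ∧
      QuadContains q₁ A₁ ∧ QuadContains q₁ A₂ ∧ QuadContains q₁ A₃ ∧
      QuadContains q₂ L ∧ QuadContains q₂ L' ∧
      QuadContains q₂ A₁ ∧ QuadContains q₂ A₂ ∧ QuadContains q₂ A₃ ∧
      ∀ a : ℂ, q₂ ≠ a • q₁ := by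
  obtain ⟨d₁, hd₁, hd₁0⟩ := (Submodule.ne_bot_iff _).mp hAL₁
  obtain ⟨d₂, hd₂, hd₂0⟩ := (Submodule.ne_bot_iff _).mp hAL₂
  obtain ⟨d₃, hd₃, hd₃0⟩ := (Submodule.ne_bot_iff _).mp hAL₃
  obtain ⟨hd₁A, hd₁L'⟩ := hd₁
  obtain ⟨hd₂A, hd₂L'⟩ := hd₂
  obtain ⟨hd₃A, hd₃L'⟩ := hd₃
  have hA1span : A₁ = span ℂ {c₁, d₁} :=
    span_pair_eq hA₁ hcA₁ hd₁A (indep_cross hLL' hc₁ hd₁L' hc10 hd₁0)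
  -- proportionality of the dᵢ to d₁
  have hprop : ∀ (ci di : Vec4) (Ai : Submodule ℂ Vec4), ci ∈ L → ci ≠ 0 →
      (ℂ ∙ c₁) ≠ (ℂ ∙ ci) → IsProjLine Ai → ci ∈ Ai → di ∈ Ai → di ∈ L' → di ≠ 0 →
      A₁ ⊓ Ai ≠ ⊥ → ∃ α : ℂ, di = α • d₁ := by
    intro ci di Ai hciL hci0 hspan hAi hciA hdiA hdiL' hdi0 hne
    obtain ⟨x, hx, hx0⟩ := (Submodule.ne_bot_iff _).mp hne
    obtain ⟨hx1, hxi⟩ := hx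
    have hAispan : Ai = span ℂ {ci, di} :=
      span_pair_eq hAi hciA hdiA (indep_cross hLL' hciL hdiL' hci0 hdi0)
    rw [hA1span] at hx1
    rw [hAispan] at hxi
    obtain ⟨a, e, hae⟩ := Submodule.mem_span_pair.mp hx1
    obtain ⟨a', e', hae'⟩ := Submodule.mem_span_pair.mp hxi
    have hcind : LinearIndependent ℂ ![c₁, ci] := indep_pair_of_span_ne hc10 hci0 hspan
    have heq : a • c₁ + e • d₁ = a' • ci + e' • di := hae.trans hae'.symm
    have hv : a • c₁ - a' • ci = e' • di - e • d₁ := by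
      linear_combination (norm := module) heq
    have hv0 : a • c₁ - a' • ci = 0 := by
      have hmem : a • c₁ - a' • ci ∈ L ⊓ L' := by
        constructor
        · exact sub_mem (smul_mem _ _ hc₁) (smul_mem _ _ hciL)
        · rw [hv]; exact sub_mem (smul_mem _ _ hdiL') (smul_mem _ _ hd₁L')
      rw [hLL'] at hmem; simpa using hmem
    have ha0 : a = 0 ∧ -a' = 0 := by
      apply LinearIndependent.pair_iff.mp hcind
      rw [neg_smul, ← sub_eq_add_neg]
      exact hv0
    have ha'0 : a' = 0 := neg_eq_zero.mp ha0.2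
    have hx_eq : x = e • d₁ := by rw [← hae, ha0.1]; simp
    have hx_eq' : x = e' • di := by rw [← hae', ha'0]; simp
    have he'0 : e' ≠ 0 := by
      rintro rfl; rw [zero_smul] at hx_eq'; exact hx0 hx_eq'
    refine ⟨e'⁻¹ * e, ?_⟩
    have : e' • di = e • d₁ := hx_eq'.symm.trans hx_eq
    rw [mul_smul, ← this, inv_smul_smul₀ he'0]
  obtain ⟨α, hα⟩ := hprop c₂ d₂ A₂ hc₂ hc20 h12 hA₂ hcA₂ hd₂A hd₂L' hd₂0 h12n
  obtain ⟨β, hβ⟩ := hprop c₃ d₃ A₃ hc₃ hc30 h13 hA₃ hcA₃ hd₃A hd₃L' hd₃0 h13n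
  -- complement of d₁ in L'
  have hnotle : ¬ (L' ≤ ℂ ∙ d₁) := by
    intro hle
    have h1 := Submodule.finrank_mono (R := ℂ) hle
    rw [hL', finrank_span_singleton hd₁0] at h1
    omega
  obtain ⟨v, hvL', hv⟩ := SetLike.not_le_iff_exists.mp hnotle
  have hv0 : v ≠ 0 := by rintro rfl; exact hv (Submodule.zero_mem _)
  have hdind : LinearIndependent ℂ ![d₁, v] := by
    rw [linearIndependent_fin2]
    refine ⟨by simpa using hv0, fun a ha => ?_⟩
    simp only [Matrix.cons_val_one, Matrix.head_cons, Matrix.cons_val_zero] at ha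
    apply hv
    have ha0 : a ≠ 0 := by rintro rfl; rw [zero_smul] at ha; exact hd₁0 ha.symm
    rw [show v = a⁻¹ • d₁ by rw [← ha, inv_smul_smul₀ ha0]]
    exact Submodule.smul_mem _ _ (Submodule.mem_span_singleton_self d₁)
  have hcind : LinearIndependent ℂ ![c₁, c₂] := indep_pair_of_span_ne hc10 hc20 h12
  have hLspan : L = span ℂ {c₁, c₂} := span_pair_eq hL hc₁ hc₂ hcind
  have hL'span : L' = span ℂ {d₁, v} := span_pair_eq hL' hd₁L' hvL' hdind
  have htop : ⊤ ≤ span ℂ (Set.range ![c₁, c₂, d₁, v]) := by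
    have hr : Set.range ![c₁, c₂, d₁, v] = ({c₁, c₂} : Set Vec4) ∪ {d₁, v} := by
      ext z
      simp [Matrix.range_cons, Matrix.range_empty]
      tauto
    rw [hr, Submodule.span_union, ← hLspan, ← hL'span, sup_eq_top hL hL' hLL']
  have hcard : Fintype.card (Fin 4) = Module.finrank ℂ Vec4 := by simp
  set b : Basis (Fin 4) ℂ Vec4 := basisOfTopLeSpanOfCardEqFinrank ![c₁, c₂, d₁, v] htop hcard
    with hbdef
  have hb : ⇑b = ![c₁, c₂, d₁, v] := coe_basisOfTopLeSpanOfCardEqFinrank _ _ _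
  have hb0 : b 0 = c₁ := by rw [hb]; rfl
  have hb1 : b 1 = c₂ := by rw [hb]; rfl
  have hb2 : b 2 = d₁ := by rw [hb]; rfl
  have hb3 : b 3 = v := by rw [hb]; rfl
  set q₁ : QuadraticForm ℂ Vec4 := pq (b.coord 0) (b.coord 3) with hq1def
  set q₂ : QuadraticForm ℂ Vec4 := pq (b.coord 1) (b.coord 3) with hq2def
  have hq1e : ∀ x : Vec4, q₁ x = b.repr x 0 * b.repr x 3 := by
    intro x; rw [hq1def, pq_apply, Basis.coord_apply, Basis.coord_apply]
  have hq2e : ∀ x : Vec4, q₂ x = b.repr x 1 * b.repr x 3 := by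
    intro x; rw [hq2def, pq_apply, Basis.coord_apply, Basis.coord_apply]
  -- all three lines have vanishing coordinates 3 (and their span)
  have memL : b 0 ∈ L ∧ b 1 ∈ L ∧ b 2 ∈ L' ∧ b 3 ∈ L' := by
    refine ⟨by rw [hb0]; exact hc₁, by rw [hb1]; exact hc₂,
      by rw [hb2]; exact hd₁L', by rw [hb3]; exact hvL'⟩
  have hr3A : ∀ x, x ∈ A₁ ∨ x ∈ A₂ ∨ x ∈ A₃ → b.repr x 3 = 0 := by
    intro x hx
    have hA2span : A₂ = span ℂ {c₂, d₂} :=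
      span_pair_eq hA₂ hcA₂ hd₂A (indep_cross hLL' hc₂ hd₂L' hc20 hd₂0)
    have hA3span : A₃ = span ℂ {c₃, d₃} :=
      span_pair_eq hA₃ hcA₃ hd₃A (indep_cross hLL' hc₃ hd₃L' hc30 hd₃0)
    obtain ⟨st, hst⟩ : ∃ st : ℂ × ℂ, st.1 • c₁ + st.2 • c₂ = c₃ := by
      obtain ⟨s, t, hst⟩ := Submodule.mem_span_pair.mp (hLspan ▸ hc₃)
      exact ⟨(s, t), hst⟩
    rcases hx with hx | hx | hx
    · rw [hA1span] at hx
      obtain ⟨a, e, hae⟩ := Submodule.mem_span_pair.mp hx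
      rw [← hae, ← hb0, ← hb2]
      simp [Finsupp.single_apply]
    · rw [hA2span] at hx
      obtain ⟨a, e, hae⟩ := Submodule.mem_span_pair.mp hx
      rw [← hae, hα, ← hb1, ← hb2, smul_smul]
      simp [Finsupp.single_apply]
    · rw [hA3span] at hx
      obtain ⟨a, e, hae⟩ := Submodule.mem_span_pair.mp hx
      rw [← hae, hβ, ← hst, ← hb0, ← hb1, ← hb2, smul_smul]
      simp [Finsupp.single_apply]
  have hcont : ∀ (qq : QuadraticForm ℂ Vec4) (i : Fin 4),
      (∀ x : Vec4, qq x = b.repr x i * b.repr x 3) → (i = 0 ∨ i = 1) →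
      QuadContains qq L ∧ QuadContains qq L' ∧ QuadContains qq A₁ ∧
      QuadContains qq A₂ ∧ QuadContains qq A₃ := by
    intro qq i he hi
    have hL0 : QuadContains qq L := by
      intro x hx
      obtain ⟨e2, e3⟩ := coord_mem_left hLL' b memL.1 memL.2.1 memL.2.2.1 memL.2.2.2 hx
      rw [he, e3, mul_zero]
    have hA1' : QuadContains qq A₁ := fun x hx => by
      rw [he, hr3A x (Or.inl hx), mul_zero]
    have hA2' : QuadContains qq A₂ := fun x hx => by
      rw [he, hr3A x (Or.inr (Or.inl hx)), mul_zero]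
    have hA3' : QuadContains qq A₃ := fun x hx => by
      rw [he, hr3A x (Or.inr (Or.inr hx)), mul_zero]
    refine ⟨hL0, ?_, hA1', hA2', hA3'⟩
    intro x hx
    obtain ⟨e0, e1⟩ := coord_mem_right hLL' b memL.1 memL.2.1 memL.2.2.1 memL.2.2.2 hx
    rcases hi with rfl | rfl
    · rw [he, e0, zero_mul]
    · rw [he, e1, zero_mul]
  obtain ⟨hq1L, hq1L', hq1A1, hq1A2, hq1A3⟩ := hcont q₁ 0 hq1e (Or.inl rfl)
  obtain ⟨hq2L, hq2L', hq2A1, hq2A2, hq2A3⟩ := hcont q₂ 1 hq2e (Or.inr rfl)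
  have hq1ne : q₁ ≠ 0 := by
    intro h
    have h1 : q₁ (b 0 + b 3) = 1 := by rw [hq1e]; simp [Finsupp.single_apply]
    rw [h] at h1; simp at h1
  have hq2ne : q₂ ≠ 0 := by
    intro h
    have h1 : q₂ (b 1 + b 3) = 1 := by rw [hq2e]; simp [Finsupp.single_apply]
    rw [h] at h1; simp at h1
  refine ⟨q₁, q₂, hq1ne, hq2ne, hq1L, hq1L', hq1A1, hq1A2, hq1A3,
    hq2L, hq2L', hq2A1, hq2A2, hq2A3, ?_⟩
  intro a h
  have h1 : q₂ (b 1 + b 3) = 1 := by rw [hq2e]; simp [Finsupp.single_apply]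
  have h2 : (a • q₁) (b 1 + b 3) = 0 := by
    rw [QuadraticMap.smul_apply, hq1e]
    simp [Finsupp.single_apply]
  rw [h, h2] at h1
  exact one_ne_zero h1.symm

end Quadric53

/-- **Lemma 5.3.** Let `L, L'` be two disjoint lines in ℙ³, let `c₁, c₂, c₃ ∈ L` be
distinct points and let `A₁, A₂, A₃` be lines such that `cᵢ ∈ Aᵢ` and each `Aᵢ` meets
`L'`.  There is a unique quadric (a nonzero quadratic form, unique up to scaling)
containing `L, L', A₁, A₂` and `A₃` if and only if at least two of the `Aᵢ` are
disjoint. -/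
theorem unique_quadric_iff_two_disjoint
    (L L' : Submodule ℂ Vec4) (hL : IsProjLine L) (hL' : IsProjLine L')
    (hLL' : L ⊓ L' = ⊥)
    (c : Fin 3 → Vec4) (hc0 : ∀ i, c i ≠ 0) (hcL : ∀ i, c i ∈ L)
    (hcdist : ∀ i j : Fin 3, i ≠ j → (ℂ ∙ c i) ≠ (ℂ ∙ c j))
    (A : Fin 3 → Submodule ℂ Vec4) (hA : ∀ i, IsProjLine (A i))
    (hcA : ∀ i, c i ∈ A i) (hAL' : ∀ i, A i ⊓ L' ≠ ⊥) :
    (∃ q : QuadraticForm ℂ Vec4, q ≠ 0 ∧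
        QuadContains q L ∧ QuadContains q L' ∧ (∀ i, QuadContains q (A i)) ∧
        ∀ q' : QuadraticForm ℂ Vec4, q' ≠ 0 →
          QuadContains q' L → QuadContains q' L' → (∀ i, QuadContains q' (A i)) →
            ∃ a : ℂ, q' = a • q) ↔
      ∃ i j : Fin 3, i ≠ j ∧ A i ⊓ A j = ⊥ := by
  constructor
  · rintro ⟨q, hq0, hqL, hqL', hqA, huniq⟩
    by_contra hno
    push_neg at hno
    obtain ⟨q₁, q₂, hq1ne, hq2ne, h1L, h1L', h1A1, h1A2, h1A3,
        h2L, h2L', h2A1, h2A2, h2A3, hnp⟩ :=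
      Quadric53.aux_not_unique L L' hL hL' hLL' (c 0) (c 1) (c 2)
        (hcL 0) (hcL 1) (hcL 2) (hc0 0) (hc0 1) (hc0 2)
        (hcdist 0 1 (by decide)) (hcdist 0 2 (by decide))
        (A 0) (A 1) (A 2) (hA 0) (hA 1) (hA 2) (hcA 0) (hcA 1) (hcA 2)
        (hAL' 0) (hAL' 1) (hAL' 2)
        (hno 0 1 (by decide)) (hno 0 2 (by decide))
    obtain ⟨a₁, ha₁⟩ := huniq q₁ hq1ne h1L h1L' (by intro i; fin_cases i <;> assumption)
    obtain ⟨a₂, ha₂⟩ := huniq q₂ hq2ne h2L h2L' (by intro i; fin_cases i <;> assumption)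
    have ha₁0 : a₁ ≠ 0 := by rintro rfl; rw [zero_smul] at ha₁; exact hq1ne ha₁
    apply hnp (a₂ * a₁⁻¹)
    rw [ha₂, ha₁, smul_smul, mul_assoc, inv_mul_cancel₀ ha₁0, mul_one]
  · rintro ⟨i, j, hij, hdisj⟩
    obtain ⟨k, hik, hjk⟩ : ∃ k : Fin 3, i ≠ k ∧ j ≠ k := by
      have h3 : ∀ i j : Fin 3, i ≠ j → ∃ k, i ≠ k ∧ j ≠ k := by decide
      exact h3 i j hij
    obtain ⟨q, hq0, hqL, hqL', hqAi, hqAj, hqAk, huniq⟩ :=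
      Quadric53.aux_exists_unique L L' hL hL' hLL' (c i) (c j) (c k)
        (hcL i) (hcL j) (hcL k) (hc0 i) (hc0 j) (hc0 k)
        (hcdist i j hij) (hcdist i k hik) (hcdist j k hjk)
        (A i) (A j) (A k) (hA i) (hA j) (hA k) (hcA i) (hcA j) (hcA k)
        (hAL' i) (hAL' j) (hAL' k) hdisj
    have hall : ∀ m : Fin 3, m = i ∨ m = j ∨ m = k := by
      have h3 : ∀ i j k m : Fin 3, i ≠ j → i ≠ k → j ≠ k → (m = i ∨ m = j ∨ m = k) := by
        decide
      exact fun m => h3 i j k m hij hik hjk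
    refine ⟨q, hq0, hqL, hqL', ?_, ?_⟩
    · intro m
      rcases hall m with rfl | rfl | rfl <;> assumption
    · intro q' hq'0 hq'L hq'L' hq'A
      exact huniq q' hq'0 hq'L hq'L' (hq'A i) (hq'A j) (hq'A k)

end
end
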